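/- arXiv:2008.10673 — 2 statements merged into one kernel-verified Lean document; each statement's English description precedes it below -/
import Mathlib

section
/- Let A = (x1, x2) ∈ ℂ². The equation (x1 − x1')² + (x2 − x2')² = 0 with (x1', x2') ∈ ℝ² holds if and only if (x1', x2') equals A1 = (Re x1 − Im x2, Im x1 + Re x2) or A2 = (Re x1 + Im x2, Re x2 − Im x1). -/
/-- For a complex point `A = (x₁, x₂) ∈ ℂ²`, the real points `(x₁', x₂') ∈ ℝ²` satisfying
the characteristic equation `(x₁ - x₁')² + (x₂ - x₂')² = 0` are exactly
`A₁ = (Re x₁ - Im x₂, Im x₁ + Re x₂)` and `A₂ = (Re x₁ + Im x₂, Re x₂ - Im x₁)`. -/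
theorem real_points_of_characteristic (x1 x2 : ℂ) (x1' x2' : ℝ) :
    (x1 - (x1' : ℂ)) ^ 2 + (x2 - (x2' : ℂ)) ^ 2 = 0 ↔
      ((x1' = x1.re - x2.im ∧ x2' = x1.im + x2.re) ∨
       (x1' = x1.re + x2.im ∧ x2' = x2.re - x1.im)) := by
  have key : (x1 - (x1' : ℂ)) ^ 2 + (x2 - (x2' : ℂ)) ^ 2 =
      ((x1 - x1') + (x2 - x2') * Complex.I) * ((x1 - x1') - (x2 - x2') * Complex.I) := by
    linear_combination (x2 - (x2' : ℂ)) ^ 2 * Complex.I_sq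
  rw [key, mul_eq_zero]
  constructor
  · rintro (h | h) <;> [left; right] <;>
      rw [Complex.ext_iff] at h <;>
      simp [Complex.add_re, Complex.add_im, Complex.sub_re, Complex.sub_im,
        Complex.mul_re, Complex.mul_im, Complex.I_re, Complex.I_im] at h <;>
      constructor <;> linarith [h.1, h.2]
  · rintro (⟨h1, h2⟩ | ⟨h1, h2⟩) <;> [left; right] <;>
      subst h1 <;> subst h2 <;>
      rw [Complex.ext_iff] <;>
      simp
end

section
/- For the four explicit 4×4 matrices M_{ℓ,j} (ℓ, j ∈ {1,2}) of the strip problem, the commutation relations M_{1,j} M_{2,k} = M_{2,k} M_{1,j} hold for all j, k ∈ {1,2}. -/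
/-- The monodromy matrices of the strip (segment) diffraction problem. -/
def M11 : Matrix (Fin 4) (Fin 4) ℤ := !![1,-1,0,0; 0,-1,0,0; 0,-2,1,0; 0,0,0,1]
def M12 : Matrix (Fin 4) (Fin 4) ℤ := !![1,0,-1,0; 0,1,-2,0; 0,0,-1,0; 0,0,0,1]
def M21 : Matrix (Fin 4) (Fin 4) ℤ := !![1,0,0,-1; 0,1,0,0; 0,0,1,0; 0,0,0,-1]
def M22 : Matrix (Fin 4) (Fin 4) ℤ := !![1,-1,1,-1; 0,1,0,0; 0,0,1,0; 0,-2,2,-1]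

/-- `M ℓ j` is the strip monodromy matrix `M_{ℓ,j}` for `ℓ, j ∈ {1,2}` (here indexed by `Fin 2`). -/
def M : Fin 2 → Fin 2 → Matrix (Fin 4) (Fin 4) ℤ
  | 0, 0 => M11
  | 0, 1 => M12
  | 1, 0 => M21
  | 1, 1 => M22

/-- The commutation relations `M_{1,j} M_{2,k} = M_{2,k} M_{1,j}` for all `j, k ∈ {1,2}`. -/
theorem strip_matrices_commute :
    ∀ j k : Fin 2, M 0 j * M 1 k = M 1 k * M 0 j := by
  decide
end
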